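/- For all integers n ≥ 1 and 0 ≤ m ≤ n, the m-th derivative of the Chebyshev polynomial T_n evaluated at 1 equals ∏_{j=0}^{m-1} (n² - j²)/(2j+1), and evaluated at -1 equals (-1)^{n+m} ∏_{j=0}^{m-1} (n² - j²)/(2j+1). -/
import Mathlib
open Polynomial Polynomial.Chebyshev Finset

lemma cheb_ode (n : ℤ) : (1 - X ^ 2 : ℚ[X]) * derivative (derivative (T ℚ n)) =
    X * derivative (T ℚ n) - ((n : ℚ[X]) ^ 2) * T ℚ n := by
  have h1 := T_derivative_eq_U (R := ℚ) n
  have h2 := add_one_mul_T_eq_poly_in_U (R := ℚ) (n - 1)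
  have h3 := congr_arg derivative h1
  rw [derivative_mul] at h3
  simp only [derivative_intCast, zero_mul, zero_add] at h3
  rw [sub_add_cancel] at h2
  push_cast at h2
  linear_combination (1 - X^2 : ℚ[X]) * h3 + (n : ℚ[X]) * h2 - X * h1

lemma cheb_ode_iter (n : ℤ) (m : ℕ) : (1 - X ^ 2 : ℚ[X]) * derivative^[m+2] (T ℚ n) =
    (2 * (m : ℚ[X]) + 1) * X * derivative^[m+1] (T ℚ n)
      - ((n : ℚ[X]) ^ 2 - (m : ℚ[X]) ^ 2) * derivative^[m] (T ℚ n) := by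
  induction m with
  | zero => simpa using cheb_ode n
  | succ m ih =>
    have h := congr_arg derivative ih
    simp only [derivative_mul, derivative_sub, derivative_add, derivative_one, derivative_X_pow,
      derivative_X, derivative_natCast, derivative_intCast, derivative_pow, derivative_ofNat, Nat.succ_eq_add_one, map_ofNat, C_eq_natCast, Nat.cast_ofNat, show m+1+1 = m+2 from rfl,
      ← Function.iterate_succ_apply' derivative] at h
    push_cast at h ⊢
    linear_combination h

lemma T_eval_one' (n : ℕ) : (T ℚ n).eval 1 = 1 := by
  induction n using Nat.twoStepInduction with
  | zero => simp [T_zero]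
  | one => simp [T_one]
  | more k ih1 ih2 =>
    push_cast
    rw [T_add_two]
    push_cast at ih1 ih2
    simp [eval_sub, eval_mul, ih1, ih2]; norm_num

lemma T_eval_neg_one' (n : ℕ) : (T ℚ n).eval (-1) = (-1) ^ n := by
  induction n using Nat.twoStepInduction with
  | zero => simp [T_zero]
  | one => simp [T_one]
  | more k ih1 ih2 =>
    push_cast
    rw [T_add_two]
    push_cast at ih1 ih2
    simp only [eval_sub, eval_mul, eval_ofNat, eval_X, ih1, ih2]
    ring

/-- For `1 ≤ n` and `0 ≤ m ≤ n`, `T_n^{(m)}(1) = ∏_{j=0}^{m-1} (n²-j²)/(2j+1)` and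
`T_n^{(m)}(-1) = (-1)^{n+m} ∏_{j=0}^{m-1} (n²-j²)/(2j+1)`, working over ℚ. -/
theorem chebyshev_deriv_eval_pm_one (n m : ℕ) (hn : 1 ≤ n) (hm : m ≤ n) :
    (derivative^[m] (T ℚ n)).eval 1 =
        ∏ j ∈ range m, ((n : ℚ) ^ 2 - (j : ℚ) ^ 2) / (2 * (j : ℚ) + 1) ∧
    (derivative^[m] (T ℚ n)).eval (-1) =
        (-1) ^ (n + m) * ∏ j ∈ range m, ((n : ℚ) ^ 2 - (j : ℚ) ^ 2) / (2 * (j : ℚ) + 1) := by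
  clear hn hm
  induction m with
  | zero => simp [T_eval_one' n, T_eval_neg_one' n]
  | succ m ih =>
    obtain ⟨ih1, ih2⟩ := ih
    have h := cheb_ode_iter (n : ℤ) m
    have h1 := congr_arg (eval (1 : ℚ)) h
    have h2 := congr_arg (eval (-1 : ℚ)) h
    simp only [eval_mul, eval_sub, eval_add, eval_one, eval_pow, eval_X, eval_natCast,
      eval_intCast, eval_ofNat, one_pow, Function.iterate_succ_apply,
      ← Function.iterate_succ_apply' derivative] at h1 h2
    norm_num at h1 h2
    rw [show derivative^[m+1] (T ℚ n) = derivative^[m] (derivative (T ℚ n)) from Function.iterate_succ_apply _ _ _]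
    have hd : (2 * (m : ℚ) + 1) ≠ 0 := by positivity
    have e1 : (derivative^[m] (derivative (T ℚ n))).eval 1
        = ((n : ℚ)^2 - (m : ℚ)^2) / (2*(m:ℚ)+1) * (derivative^[m] (T ℚ n)).eval 1 := by
      field_simp
      push_cast at h1
      linarith [h1]
    have e2 : (derivative^[m] (derivative (T ℚ n))).eval (-1)
        = -(((n : ℚ)^2 - (m : ℚ)^2) / (2*(m:ℚ)+1)) * (derivative^[m] (T ℚ n)).eval (-1) := by
      field_simp
      push_cast at h2
      linarith [h2]
    rw [prod_range_succ]
    refine ⟨?_, ?_⟩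
    · rw [e1, ih1]; ring
    · rw [e2, ih2, show n + (m+1) = (n+m)+1 from rfl, pow_succ]; ring
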